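/- Let s > 1 and 0 < r₀ < 1. Then there exist N = N(r₀) > 1 and C = C(s, r₀) > 0 such that for every a ∈ 𝔻 with 1 − |a| < 1/(2N), setting t_N = 1 − N(1−|a|), for every z ∈ Δ(a, r₀) and every w ∈ 𝔻 one has |(1−āz)^{−s} − (1−āw)^{−s}| + |(1−t_N āz)^{−s} − (1−t_N āw)^{−s}| ≥ C ρ(z,w) |1−āz|^{−s}, where for ξ ∈ ℂ with Re ξ > 0, ξ^{−s} denotes the principal branch exp(−s Log ξ). -/

import Mathlib

open MeasureTheory Set Complex Filter
open scoped ENNReal Real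

noncomputable section

/-- The open unit disk in `ℂ`. -/
def uDisk : Set ℂ := {z : ℂ | ‖z‖ < 1}

/-- Area measure on `ℂ`, normalized so that the unit disk has measure `1`. -/
def volA : Measure ℂ := (ENNReal.ofReal Real.pi)⁻¹ • volume

/-- Pseudo-hyperbolic distance `ρ(z,w) = |z - w| / |1 - w̄ z|`. -/
def pd (z w : ℂ) : ℝ := ‖(z - w)‖ / ‖(1 - (starRingEnd ℂ) w * z)‖

/-- Pseudo-hyperbolic disk `Δ(a,t)`. -/
def pDisk (a : ℂ) (t : ℝ) : Set ℂ := {z | z ∈ uDisk ∧ pd z a < t}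

/-- The weighted Bergman measure `dA_α = (α+1)(1-|z|²)^α dA` on the unit disk. -/
def bergMeasure (α : ℝ) : Measure ℂ :=
  (volA.restrict uDisk).withDensity fun z =>
    ENNReal.ofReal ((α + 1) * (1 - ‖z‖ ^ 2) ^ α)

/-- The joint pull-back measure `μ` induced by `φ` and `ψ`:
`μ(E) = ∫_{φ⁻¹E} ρ(z)^q dA_α + ∫_{ψ⁻¹E} ρ(z)^q dA_α` where `ρ(z) = ρ(φ z, ψ z)`. -/
def jointMu (q α : ℝ) (φ ψ : ℂ → ℂ) : Measure ℂ :=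
  Measure.map φ ((bergMeasure α).withDensity fun z => ENNReal.ofReal (pd (φ z) (ψ z) ^ q))
  + Measure.map ψ ((bergMeasure α).withDensity fun z => ENNReal.ofReal (pd (φ z) (ψ z) ^ q))

/-- The Hardy space (quasi-)norm `‖f‖_{H^p}`. -/
def hardyNorm (p : ℝ) (f : ℂ → ℂ) : ℝ≥0∞ :=
  (⨆ r : Ioo (0:ℝ) 1,
      (ENNReal.ofReal (2 * Real.pi))⁻¹ *
        ∫⁻ θ in Ioc (0:ℝ) (2 * Real.pi),
          ENNReal.ofReal
            (‖(f (((r : ℝ) : ℂ) * Complex.exp ((θ : ℂ) * Complex.I)))‖ ^ p)) ^ (1 / p)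

/-- The weighted Bergman space (quasi-)norm `‖f‖_{A^q_α}`. -/
def bergNorm (q α : ℝ) (f : ℂ → ℂ) : ℝ≥0∞ :=
  (∫⁻ z, ENNReal.ofReal (‖(f z)‖ ^ q) ∂bergMeasure α) ^ (1 / q)

/-- The difference of composition-differentiation operators, `(D_φ - D_ψ) f = f'∘φ - f'∘ψ`. -/
def diffOp (φ ψ f : ℂ → ℂ) : ℂ → ℂ := fun z => deriv f (φ z) - deriv f (ψ z)

/-- Boundedness of `D_φ - D_ψ : H^p → A^q_α`. -/
def DBounded (p q α : ℝ) (φ ψ : ℂ → ℂ) : Prop :=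
  ∃ C > 0, ∀ f : ℂ → ℂ, DifferentiableOn ℂ f uDisk → hardyNorm p f < ⊤ →
    bergNorm q α (diffOp φ ψ f) ≤ ENNReal.ofReal C * hardyNorm p f

/-- Compactness of `D_φ - D_ψ : H^p → A^q_α`. -/
def DCompact (p q α : ℝ) (φ ψ : ℂ → ℂ) : Prop :=
  ∀ f : ℕ → ℂ → ℂ, (∀ n, DifferentiableOn ℂ (f n) uDisk) →
    (∀ n, hardyNorm p (f n) ≤ 1) →
    (∀ K, K ⊆ uDisk → IsCompact K → TendstoUniformlyOn f (fun _ => (0:ℂ)) atTop K) →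
    Tendsto (fun n => bergNorm q α (diffOp φ ψ (f n))) atTop (nhds 0)

/-- The Koranyi approach region `Γ(ζ)`. -/
def koranyi (ζ : ℂ) : Set ℂ :=
  {z | z ∈ uDisk ∧ ‖(1 - (starRingEnd ℂ) ζ * z)‖ < 1 - ‖z‖ ^ 2}

/-- The Carleson region `Q_t(ζ)`. -/
def cBox (ζ : ℂ) (t : ℝ) : Set ℂ :=
  {z | z ∈ uDisk ∧ ‖(1 - (starRingEnd ℂ) ζ * z)‖ < t}

/-- The operator (quasi-)norm of `D_φ - D_ψ : H^p → A^q_α`: the least constant `C ≥ 0`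
with `‖(D_φ - D_ψ) f‖_{A^q_α} ≤ C ‖f‖_{H^p}` for all `f ∈ H^p`. -/
def opNorm (p q α : ℝ) (φ ψ : ℂ → ℂ) : ℝ≥0∞ :=
  sInf {C : ℝ≥0∞ | ∀ f : ℂ → ℂ, DifferentiableOn ℂ f uDisk → hardyNorm p f < ⊤ →
    bergNorm q α (diffOp φ ψ f) ≤ C * hardyNorm p f}

/-! Write `x = 1 - āz`, `y = 1 - āw` and `d = 1 - |a|`. For `z ∈ Δ(a, r₀)` one has
`d ≤ |x| ≤ 2d / (1 - r₀)` and `(1 - r₀) d ≤ 4 (1 - |z|)`. If `|y| ≥ 2|x|`, the first difference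
alone is at least `|x|^{-s} / 2`, while `ρ ≤ 1`. Otherwise `|x|, |y| ≲ d`, and the dilated kernel is
`(Nd + t_N x)^{-s}`: for `N` large its argument stays in a disk about `Nd` so small that the
derivative of `u ↦ u^{-s}` varies by at most half its size there, hence the second difference is
`≳ d^{-s-1} |x - y|`, which dominates `ρ(z, w) |x|^{-s} ≲ d^{-s-1} |z - w|`. -/

lemma norm_exp_sub_exp_le {A B : ℂ} (h : ‖A - B‖ ≤ 1) :
    ‖exp A - exp B‖ ≤ 2 * ‖A - B‖ * ‖exp B‖ := by
  have e : exp A - exp B = exp B * (exp (A - B) - 1) := by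
    rw [mul_sub, mul_one, ← exp_add, add_sub_cancel]
  rw [e, norm_mul, mul_comm]
  gcongr
  exact norm_exp_sub_one_le h

lemma norm_log_sub_log_le {m : ℝ} (hm : 0 < m) {u v : ℂ} (hu : m ≤ u.re) (hv : m ≤ v.re) :
    ‖log u - log v‖ ≤ ‖u - v‖ / m := by
  have hderiv : ∀ l ∈ {l : ℂ | m ≤ l.re}, HasDerivWithinAt log l⁻¹ {l | m ≤ l.re} l :=
    fun l hl => (hasDerivAt_log (Or.inl (hm.trans_le hl))).hasDerivWithinAt
  have hbound : ∀ l ∈ {l : ℂ | m ≤ l.re}, ‖l⁻¹‖ ≤ m⁻¹ := fun l hl => by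
    rw [norm_inv]
    exact inv_anti₀ hm (hl.trans (re_le_norm l))
  rw [div_eq_inv_mul]
  exact (convex_halfSpace_re_ge m).norm_image_sub_le_of_norm_hasDerivWithin_le hderiv hbound hv hu

lemma norm_cpow_sub_cpow_le {m : ℝ} (hm : 0 < m) {u v c : ℂ} (hu : m ≤ u.re) (hv : m ≤ v.re)
    (h : ‖c‖ * ‖u - v‖ / m ≤ 1) :
    ‖u ^ c - v ^ c‖ ≤ 2 * (‖c‖ * ‖u - v‖ / m) * ‖v ^ c‖ := by
  have hu0 : u ≠ 0 := fun h0 => by simp [h0] at hu; linarith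
  have hv0 : v ≠ 0 := fun h0 => by simp [h0] at hv; linarith
  have hlog : ‖log u * c - log v * c‖ ≤ ‖c‖ * ‖u - v‖ / m := by
    rw [← sub_mul, norm_mul, mul_comm, mul_div_assoc]
    gcongr
    exact norm_log_sub_log_le hm hu hv
  rw [cpow_def_of_ne_zero hu0, cpow_def_of_ne_zero hv0]
  calc _ ≤ 2 * ‖log u * c - log v * c‖ * ‖exp (log v * c)‖ :=
        norm_exp_sub_exp_le (hlog.trans h)
    _ ≤ _ := by gcongr

theorem Convex.mul_norm_sub_le_norm_image_sub {f f' : ℂ → ℂ} {S : Set ℂ} (hS : Convex ℝ S)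
    (hf : ∀ l ∈ S, HasDerivWithinAt f (f' l) S l) {K : ℝ} {x y : ℂ} (hx : x ∈ S) (hy : y ∈ S)
    (hf' : ∀ l ∈ S, ‖f' l - f' y‖ ≤ K) :
    (‖f' y‖ - K) * ‖x - y‖ ≤ ‖f x - f y‖ := by
  have hmvt : ‖f x - f y - (x - y) * f' y‖ ≤ K * ‖x - y‖ := by
    refine hS.norm_image_sub_le_of_norm_hasFDerivWithin_le'
      (φ := ContinuousLinearMap.toSpanSingleton ℂ (f' y))
      (fun l hl => (hf l hl).hasFDerivWithinAt) (fun l hl => ?_) hy hx |>.trans_eq' ?_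
    · have : ContinuousLinearMap.toSpanSingleton ℂ (f' l) - .toSpanSingleton ℂ (f' y) =
          .toSpanSingleton ℂ (f' l - f' y) := by ext; simp
      rw [this, ContinuousLinearMap.norm_toSpanSingleton]
      exact hf' l hl
    · simp [ContinuousLinearMap.toSpanSingleton_apply]
  have htri := norm_sub_norm_le ((x - y) * f' y) (f x - f y)
  rw [norm_sub_rev _ (f x - f y), norm_mul] at htri
  linarith

lemma mul_norm_sub_le_norm_cpow_neg_sub {s m ρ : ℝ} (hs : 0 ≤ s) (hm : 0 < m)
    (hρ : 16 * (s + 1) * ρ ≤ m) {u v : ℂ} (hu : ‖u - m‖ ≤ ρ) (hv : ‖v - m‖ ≤ ρ) :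
    s / 2 * (m + ρ) ^ (-(s + 1)) * ‖u - v‖ ≤ ‖u ^ (-(s : ℂ)) - v ^ (-(s : ℂ))‖ := by
  set S := Metric.closedBall (m : ℂ) ρ
  have huS : u ∈ S := mem_closedBall_iff_norm.2 hu
  have hvS : v ∈ S := mem_closedBall_iff_norm.2 hv
  have hre : ∀ l ∈ S, m / 2 ≤ l.re := fun l hl => by
    have h := (abs_le.1 ((abs_re_le_norm (l - m)).trans (mem_closedBall_iff_norm.1 hl))).1
    rw [sub_re, ofReal_re] at h
    nlinarith [(norm_nonneg _).trans hu]
  set c : ℂ := ((-(s + 1) : ℝ) : ℂ)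
  have hc : ‖c‖ = s + 1 := by rw [norm_real, Real.norm_of_nonpos (by linarith), neg_neg]
  have hderiv : ∀ l ∈ S, HasDerivWithinAt (· ^ (-(s : ℂ))) (-(s : ℂ) * l ^ c) S l := fun l hl => by
    have : c = -(s : ℂ) - 1 := by push_cast [c]; ring
    rw [this]
    exact (hasStrictDerivAt_cpow_const (Or.inl (by linarith [hre l hl]))).hasDerivAt.hasDerivWithinAt
  have hnorm : ‖-(s : ℂ) * v ^ c‖ = s * ‖v‖ ^ (-(s + 1)) := by
    rw [norm_mul, norm_neg, norm_real, Real.norm_of_nonneg hs, norm_cpow_real]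
  have hvar : ∀ l ∈ S, ‖-(s : ℂ) * l ^ c - -(s : ℂ) * v ^ c‖ ≤ s * ‖v‖ ^ (-(s + 1)) / 2 :=
      fun l hl => by
    have hlv : ‖l - v‖ ≤ 2 * ρ := by
      have := norm_sub_le_norm_sub_add_norm_sub l (m : ℂ) v
      rw [norm_sub_rev (m : ℂ) v] at this
      linarith [mem_closedBall_iff_norm.1 hl]
    have hsmall : ‖c‖ * ‖l - v‖ / (m / 2) ≤ 1 / 4 := by
      rw [hc, div_le_iff₀ (by positivity)]
      nlinarith
    have := norm_cpow_sub_cpow_le (by positivity) (hre l hl) (hre v hvS)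
      (hsmall.trans (by norm_num))
    rw [norm_cpow_real] at this
    rw [← mul_sub, norm_mul, norm_neg, norm_real, Real.norm_of_nonneg hs, mul_div_assoc]
    gcongr
    calc _ ≤ 2 * (1 / 4) * ‖v‖ ^ (-(s + 1)) := this.trans (by gcongr)
      _ = _ := by ring
  have hmain := (convex_closedBall (m : ℂ) ρ).mul_norm_sub_le_norm_image_sub hderiv huS hvS hvar
  rw [hnorm] at hmain
  have hv0 : 0 < ‖v‖ := (by linarith [hre v hvS] : 0 < v.re).trans_le (re_le_norm v)
  have hvle : ‖v‖ ≤ m + ρ := by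
    have := norm_le_norm_add_norm_sub' v (m : ℂ)
    rw [norm_real, Real.norm_of_nonneg hm.le] at this
    linarith
  have : (m + ρ) ^ (-(s + 1)) ≤ ‖v‖ ^ (-(s + 1)) :=
    Real.rpow_le_rpow_of_nonpos hv0 hvle (by linarith)
  calc s / 2 * (m + ρ) ^ (-(s + 1)) * ‖u - v‖
      ≤ (s * ‖v‖ ^ (-(s + 1)) - s * ‖v‖ ^ (-(s + 1)) / 2) * ‖u - v‖ := by
        rw [sub_half, mul_div_right_comm]; gcongr
    _ ≤ _ := hmain

lemma mul_norm_sub_le_norm_shifted_cpow_neg_sub {s d B N t : ℝ} (hs : 0 ≤ s) (hd : 0 < d)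
    (hB : 0 < B) (hN : 16 * (s + 1) * B ≤ N) (ht0 : 1 / 2 ≤ t) (ht1 : t ≤ 1) {x y : ℂ}
    (hx : ‖x‖ ≤ B * d) (hy : ‖y‖ ≤ B * d) :
    s / 4 * ((N + B) * d) ^ (-(s + 1)) * ‖x - y‖ ≤
      ‖(((N * d : ℝ) : ℂ) + t * x) ^ (-(s : ℂ)) - (((N * d : ℝ) : ℂ) + t * y) ^ (-(s : ℂ))‖ := by
  have hN0 : 0 < N := by nlinarith
  have hball : ∀ v : ℂ, ‖v‖ ≤ B * d → ‖((N * d : ℝ) : ℂ) + t * v - ((N * d : ℝ) : ℂ)‖ ≤ B * d :=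
      fun v hv => by
    rw [add_sub_cancel_left, norm_mul, norm_real, Real.norm_of_nonneg (by linarith)]
    nlinarith [norm_nonneg v]
  have hlip := mul_norm_sub_le_norm_cpow_neg_sub hs (by positivity)
    (by nlinarith : 16 * (s + 1) * (B * d) ≤ N * d) (hball x hx) (hball y hy)
  rw [add_sub_add_left_eq_sub, ← mul_sub, norm_mul, norm_real, Real.norm_of_nonneg (by linarith),
    ← add_mul] at hlip
  refine le_trans ?_ hlip
  have : 0 ≤ s * ((N + B) * d) ^ (-(s + 1)) * ‖x - y‖ := by positivity
  nlinarith

lemma rpow_neg_div_two_le_norm_cpow_neg_sub {s : ℝ} (hs : 1 ≤ s) {x y : ℂ} (hx : x ≠ 0)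
    (h : 2 * ‖x‖ ≤ ‖y‖) : ‖x‖ ^ (-s) / 2 ≤ ‖x ^ (-(s : ℂ)) - y ^ (-(s : ℂ))‖ := by
  have hx0 : 0 < ‖x‖ := norm_pos_iff.2 hx
  have hy : ‖y‖ ^ (-s) ≤ ‖x‖ ^ (-s) / 2 := calc
    ‖y‖ ^ (-s) ≤ (2 * ‖x‖) ^ (-s) := Real.rpow_le_rpow_of_nonpos (by positivity) h (by linarith)
    _ = 2 ^ (-s) * ‖x‖ ^ (-s) := Real.mul_rpow zero_le_two hx0.le
    _ ≤ 2 ^ (-1 : ℝ) * ‖x‖ ^ (-s) := by gcongr; exact one_le_two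
    _ = ‖x‖ ^ (-s) / 2 := by rw [Real.rpow_neg_one]; ring
  rw [← ofReal_neg]
  have htri := norm_sub_norm_le (x ^ ((-s : ℝ) : ℂ)) (y ^ ((-s : ℝ) : ℂ))
  rw [norm_cpow_real, norm_cpow_real] at htri
  linarith

lemma norm_sq_one_sub_conj_mul (b c : ℂ) :
    ‖1 - starRingEnd ℂ b * c‖ ^ 2 = ‖c - b‖ ^ 2 + (1 - ‖b‖ ^ 2) * (1 - ‖c‖ ^ 2) := by
  simp only [Complex.sq_norm, normSq_apply, sub_re, sub_im, mul_re, mul_im, one_re, one_im, conj_re,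
    conj_im]
  ring

lemma one_sub_norm_le_norm_one_sub_conj_mul {w : ℂ} (hw : ‖w‖ ≤ 1) (z : ℂ) :
    1 - ‖z‖ ≤ ‖1 - starRingEnd ℂ w * z‖ := by
  have h := norm_sub_norm_le (1 : ℂ) (starRingEnd ℂ w * z)
  rw [norm_one, norm_mul, norm_conj] at h
  nlinarith [norm_nonneg z]

lemma one_sub_norm_le_re_one_sub_conj_mul (a : ℂ) {z : ℂ} (hz : ‖z‖ ≤ 1) :
    1 - ‖a‖ ≤ (1 - starRingEnd ℂ a * z).re := by
  have h := re_le_norm (starRingEnd ℂ a * z)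
  rw [norm_mul, norm_conj] at h
  rw [sub_re, one_re]
  nlinarith [norm_nonneg a]

lemma norm_one_sub_conj_mul_pos {w z : ℂ} (hw : w ∈ uDisk) (hz : z ∈ uDisk) :
    0 < ‖1 - starRingEnd ℂ w * z‖ :=
  (sub_pos.2 hz).trans_le (one_sub_norm_le_norm_one_sub_conj_mul (le_of_lt hw) z)

lemma pd_le_one {z w : ℂ} (hz : z ∈ uDisk) (hw : w ∈ uDisk) : pd z w ≤ 1 := by
  have hz' : ‖z‖ < 1 := hz
  have hw' : ‖w‖ < 1 := hw
  have hden := norm_one_sub_conj_mul_pos hw hz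
  rw [pd, div_le_one hden, ← sq_le_sq₀ (norm_nonneg _) hden.le, norm_sq_one_sub_conj_mul]
  have : 0 ≤ (1 - ‖w‖ ^ 2) * (1 - ‖z‖ ^ 2) := by
    apply mul_nonneg <;> nlinarith [norm_nonneg z, norm_nonneg w]
  linarith

lemma pd_le_div_one_sub_norm {z w : ℂ} (hz : ‖z‖ < 1) (hw : ‖w‖ ≤ 1) :
    pd z w ≤ ‖z - w‖ / (1 - ‖z‖) :=
  div_le_div_of_nonneg_left (norm_nonneg _) (sub_pos.2 hz)
    (one_sub_norm_le_norm_one_sub_conj_mul hw z)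

lemma norm_sub_lt_of_mem_pDisk {a z : ℂ} {r : ℝ} (ha : a ∈ uDisk) (hz : z ∈ pDisk a r) :
    ‖z - a‖ < r * ‖1 - starRingEnd ℂ a * z‖ :=
  (div_lt_iff₀ (norm_one_sub_conj_mul_pos ha hz.1)).1 hz.2

lemma pos_of_mem_pDisk {a z : ℂ} {r : ℝ} (ha : a ∈ uDisk) (hz : z ∈ pDisk a r) : 0 < r :=
  pos_of_mul_pos_left ((norm_nonneg _).trans_lt (norm_sub_lt_of_mem_pDisk ha hz)) (norm_nonneg _)

lemma mul_norm_one_sub_conj_mul_le_of_mem_pDisk {a z : ℂ} {r : ℝ} (ha : a ∈ uDisk)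
    (hz : z ∈ pDisk a r) : (1 - r) * ‖1 - starRingEnd ℂ a * z‖ ≤ 1 - ‖a‖ ^ 2 := by
  have hx : 1 - starRingEnd ℂ a * z = ((1 - ‖a‖ ^ 2 : ℝ) : ℂ) + starRingEnd ℂ a * (a - z) := by
    rw [mul_sub, mul_comm _ a, mul_conj, normSq_eq_norm_sq]; push_cast; ring
  have ha' : ‖a‖ < 1 := ha
  have h := norm_add_le ((1 - ‖a‖ ^ 2 : ℝ) : ℂ) (starRingEnd ℂ a * (a - z))
  rw [← hx, norm_real, Real.norm_of_nonneg (by nlinarith [norm_nonneg a]), norm_mul, norm_conj,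
    norm_sub_rev a z] at h
  nlinarith [norm_sub_lt_of_mem_pDisk ha hz, norm_nonneg (z - a), norm_nonneg a]

lemma one_sub_mul_one_sub_norm_le_of_mem_pDisk {a z : ℂ} {r : ℝ} (hr : r ≤ 1) (ha : a ∈ uDisk)
    (hz : z ∈ pDisk a r) : (1 - r) * (1 - ‖a‖) ≤ 4 * (1 - ‖z‖) := by
  have ha' : ‖a‖ < 1 := ha
  have hz' : ‖z‖ < 1 := hz.1
  have hza := norm_sub_lt_of_mem_pDisk ha hz
  have hr0 := pos_of_mem_pDisk ha hz
  have hdx := (one_sub_norm_le_re_one_sub_conj_mul a hz'.le).trans (re_le_norm _)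
  have hid := norm_sq_one_sub_conj_mul a z
  have hd : 0 < 1 - ‖a‖ := sub_pos.2 ha'
  have hsq : (1 - r) * (1 - ‖a‖) ^ 2 ≤ (1 - ‖a‖ ^ 2) * (1 - ‖z‖ ^ 2) := by
    have h1 := pow_le_pow_left₀ (norm_nonneg _) hza.le 2
    have h2 : (1 - r) * (1 - ‖a‖) ^ 2 ≤ (1 - r ^ 2) * ‖1 - starRingEnd ℂ a * z‖ ^ 2 :=
      mul_le_mul (by nlinarith) (pow_le_pow_left₀ hd.le hdx 2) (sq_nonneg _) (by nlinarith)
    linarith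
  have hfac : (1 - ‖a‖ ^ 2) * (1 - ‖z‖ ^ 2) ≤ (1 - ‖a‖) * (4 * (1 - ‖z‖)) := calc
    _ = (1 - ‖a‖) * (1 - ‖z‖) * ((1 + ‖a‖) * (1 + ‖z‖)) := by ring
    _ ≤ (1 - ‖a‖) * (1 - ‖z‖) * 4 :=
      mul_le_mul_of_nonneg_left (by nlinarith [norm_nonneg a]) (mul_nonneg hd.le (by linarith))
    _ = _ := by ring
  nlinarith

lemma pd_nonneg (z w : ℂ) : 0 ≤ pd z w := div_nonneg (norm_nonneg _) (norm_nonneg _)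

lemma mul_pd_le_of_mem_pDisk {a z w : ℂ} {r : ℝ} (hr : r < 1) (ha : a ∈ uDisk)
    (hz : z ∈ pDisk a r) (hw : ‖w‖ ≤ 1) : (1 - r) * (1 - ‖a‖) * pd z w ≤ 4 * ‖z - w‖ := by
  have hz1 : 0 < 1 - ‖z‖ := sub_pos.2 hz.1
  calc (1 - r) * (1 - ‖a‖) * pd z w ≤ (1 - r) * (1 - ‖a‖) * (‖z - w‖ / (1 - ‖z‖)) :=
        mul_le_mul_of_nonneg_left (pd_le_div_one_sub_norm hz.1 hw)
          (mul_nonneg (sub_pos.2 hr).le (sub_pos.2 ha).le)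
    _ ≤ 4 * (1 - ‖z‖) * (‖z - w‖ / (1 - ‖z‖)) :=
        mul_le_mul_of_nonneg_right (one_sub_mul_one_sub_norm_le_of_mem_pDisk hr.le ha hz)
          (div_nonneg (norm_nonneg _) hz1.le)
    _ = 4 * ‖z - w‖ := by field_simp

lemma pd_mul_rpow_le_norm_dilated_kernel_sub {s r N : ℝ} {a z w : ℂ} (hs : 0 ≤ s) (hr : r < 1)
    (ha : a ∈ uDisk) (hz : z ∈ pDisk a r) (hw : w ∈ uDisk)
    (hN : 16 * (s + 1) * (4 / (1 - r)) ≤ N) (hNa : N * (1 - ‖a‖) < 1 / 2)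
    (hnear : ‖1 - starRingEnd ℂ a * w‖ < 2 * ‖1 - starRingEnd ℂ a * z‖) :
    (1 - r) * s / 32 * (N + 4 / (1 - r)) ^ (-(s + 1)) * pd z w *
        ‖1 - starRingEnd ℂ a * z‖ ^ (-s) ≤
      ‖(1 - ((1 - N * (1 - ‖a‖) : ℝ) : ℂ) * (starRingEnd ℂ a * z)) ^ (-(s : ℂ)) -
        (1 - ((1 - N * (1 - ‖a‖) : ℝ) : ℂ) * (starRingEnd ℂ a * w)) ^ (-(s : ℂ))‖ := by
  set B := 4 / (1 - r)
  set d := 1 - ‖a‖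
  set t := 1 - N * d
  set x := 1 - starRingEnd ℂ a * z
  set y := 1 - starRingEnd ℂ a * w
  set K := (N + B) ^ (-(s + 1))
  have hr' : 0 < 1 - r := sub_pos.2 hr
  have hd : 0 < d := sub_pos.2 ha
  have hB : 4 ≤ B := by
    rw [le_div_iff₀ hr']
    linarith [pos_of_mem_pDisk ha hz]
  have hN64 : 64 ≤ N := by nlinarith
  have ht : 1 / 2 ≤ t := by linarith
  have ht1 : t ≤ 1 := by nlinarith
  have hK : 0 ≤ K := Real.rpow_nonneg (by linarith) _
  have hxB : ‖x‖ ≤ B * d / 2 := by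
    rw [show B * d / 2 = 2 * d / (1 - r) by simp only [B]; ring, le_div_iff₀ hr', mul_comm]
    nlinarith [mul_norm_one_sub_conj_mul_le_of_mem_pDisk ha hz, norm_nonneg a]
  have hdx : d ≤ ‖x‖ := (one_sub_norm_le_re_one_sub_conj_mul a hz.1.le).trans (re_le_norm _)
  have hzw : ‖z - w‖ ≤ 2 * ‖x - y‖ := by
    have hxy : ‖x - y‖ = ‖a‖ * ‖z - w‖ := by
      rw [show x - y = starRingEnd ℂ a * (w - z) by simp only [x, y]; ring, norm_mul, norm_conj,
        norm_sub_rev]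
    nlinarith [norm_nonneg (z - w)]
  have hdilate : ∀ v : ℂ, 1 - (t : ℂ) * (starRingEnd ℂ a * v) =
      ((N * d : ℝ) : ℂ) + t * (1 - starRingEnd ℂ a * v) := fun v => by push_cast [t]; ring
  have hkernel := mul_norm_sub_le_norm_shifted_cpow_neg_sub hs hd (by linarith) hN ht ht1
    (by linarith : ‖x‖ ≤ B * d) (by linarith : ‖y‖ ≤ B * d)
  rw [← hdilate, ← hdilate] at hkernel
  have hpd := mul_pd_le_of_mem_pDisk hr ha hz hw.le
  have hsplit : ((N + B) * d) ^ (-(s + 1)) = K * (d ^ (-s) / d) := by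
    rw [Real.mul_rpow (by linarith) hd.le, neg_add', Real.rpow_sub_one hd.ne', ← neg_add']
  calc (1 - r) * s / 32 * K * pd z w * ‖x‖ ^ (-s)
      ≤ (1 - r) * s / 32 * K * pd z w * d ^ (-s) := by
        have := pd_nonneg z w
        have := hr'.le
        exact mul_le_mul_of_nonneg_left (Real.rpow_le_rpow_of_nonpos hd hdx (by linarith))
          (by positivity)
    _ = s / 32 * K * (d ^ (-s) / d) * ((1 - r) * d * pd z w) := by field_simp
    _ ≤ s / 32 * K * (d ^ (-s) / d) * (8 * ‖x - y‖) :=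
        mul_le_mul_of_nonneg_left (by linarith) (by positivity)
    _ = s / 4 * ((N + B) * d) ^ (-(s + 1)) * ‖x - y‖ := by rw [hsplit]; ring
    _ ≤ _ := hkernel

/-- Koo–Wang type reverse estimate for differences of reproducing-kernel powers. -/
theorem stmt_13 (s r₀ : ℝ) (hs : 1 < s) (h0 : 0 < r₀) (h1 : r₀ < 1) :
    ∃ N : ℝ, 1 < N ∧ ∃ C > (0:ℝ),
      ∀ a ∈ uDisk, 1 - ‖a‖ < 1 / (2 * N) →
        ∀ z ∈ pDisk a r₀, ∀ w ∈ uDisk,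
          C * pd z w * ‖(1 - (starRingEnd ℂ) a * z)‖ ^ (-s) ≤
            ‖((1 - (starRingEnd ℂ) a * z) ^ (-(s:ℂ)) -
                (1 - (starRingEnd ℂ) a * w) ^ (-(s:ℂ)))‖ +
            ‖
              ((1 - ((1 - N * (1 - ‖a‖) : ℝ) : ℂ) * ((starRingEnd ℂ) a * z)) ^ (-(s:ℂ)) -
               (1 - ((1 - N * (1 - ‖a‖) : ℝ) : ℂ) * ((starRingEnd ℂ) a * w)) ^ (-(s:ℂ)))‖ := by
  have hr : 0 < 1 - r₀ := sub_pos.2 h1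
  set N := 16 * (s + 1) * (4 / (1 - r₀))
  have hN : 1 < N := by
    have : 4 ≤ 4 / (1 - r₀) := by rw [le_div_iff₀ hr]; linarith
    nlinarith
  set C := (1 - r₀) * s / 32 * (N + 4 / (1 - r₀)) ^ (-(s + 1))
  have hC : 0 < C := by positivity
  refine ⟨N, hN, min (1 / 2) C, lt_min one_half_pos hC, fun a ha haN z hz w hw => ?_⟩
  have hpd := pd_nonneg z w
  rcases le_or_gt (2 * ‖1 - starRingEnd ℂ a * z‖) ‖1 - starRingEnd ℂ a * w‖ with hfar | hnear
  · have hx := norm_pos_iff.1 (norm_one_sub_conj_mul_pos ha hz.1)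
    calc min (1 / 2) C * pd z w * ‖1 - starRingEnd ℂ a * z‖ ^ (-s)
        ≤ 1 / 2 * 1 * ‖1 - starRingEnd ℂ a * z‖ ^ (-s) := by
          gcongr
          exacts [min_le_left _ _, pd_le_one hz.1 hw]
      _ = ‖1 - starRingEnd ℂ a * z‖ ^ (-s) / 2 := by ring
      _ ≤ _ := (rpow_neg_div_two_le_norm_cpow_neg_sub hs.le hx hfar).trans
          (le_add_of_nonneg_right (norm_nonneg _))
  · have hNa : N * (1 - ‖a‖) < 1 / 2 := by
      rw [lt_div_iff₀ (by positivity)] at haN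
      linarith
    calc min (1 / 2) C * pd z w * ‖1 - starRingEnd ℂ a * z‖ ^ (-s)
        ≤ C * pd z w * ‖1 - starRingEnd ℂ a * z‖ ^ (-s) := by gcongr; exact min_le_right _ _
      _ ≤ _ := (pd_mul_rpow_le_norm_dilated_kernel_sub (by linarith) h1 ha hz hw le_rfl hNa
          hnear).trans (le_add_of_nonneg_left (norm_nonneg _))
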